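/- arXiv:1905.03290 — 3 statements merged into one kernel-verified Lean document; each statement's English description precedes it below -/
import Mathlib

section
/- For a joint probability density q(z, ψ) with marginal q(z) = ∫ q(z, ψ) dψ, and any auxiliary density τ(ψ | z) absolutely continuous with respect to q(ψ | z), the quantity U_K = E_{ψ₀ ~ q(ψ|z)} E_{ψ₁,…,ψ_K ~ τ(·|z) i.i.d.} [ log( (1/(K+1)) Σ_{k=0}^{K} q(z, ψ_k)/τ(ψ_k | z) ) ] satisfies U_K ≥ log q(z). -/
open MeasureTheory

/-- Auxiliary: composing with a permutation of coordinates preserves integrability and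
the integral over a product of identical measures. -/
lemma iw_integral_comp_perm {Ψ : Type*} [MeasurableSpace Ψ] (μ : Measure Ψ) [SigmaFinite μ]
    {n : ℕ} (e : Equiv.Perm (Fin n)) (F : (Fin n → Ψ) → ℝ)
    (hF : Integrable F (Measure.pi fun _ : Fin n => μ)) :
    Integrable (fun x => F (x ∘ e)) (Measure.pi fun _ : Fin n => μ) ∧
      ∫ x, F (x ∘ e) ∂(Measure.pi fun _ : Fin n => μ)
        = ∫ x, F x ∂(Measure.pi fun _ : Fin n => μ) := by
  have hM : MeasurePreserving (MeasurableEquiv.piCongrLeft (fun _ : Fin n => Ψ) e.symm)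
      (Measure.pi fun _ : Fin n => μ) (Measure.pi fun _ : Fin n => μ) :=
    measurePreserving_piCongrLeft (fun _ : Fin n => μ) e.symm
  have hMx : ∀ x : Fin n → Ψ,
      (MeasurableEquiv.piCongrLeft (fun _ : Fin n => Ψ) e.symm) x = x ∘ e := by
    intro x
    funext j
    simp [MeasurableEquiv.coe_piCongrLeft, Equiv.piCongrLeft_apply_eq_cast]
  have hcomp : (fun x : Fin n → Ψ => F (x ∘ e))
      = F ∘ (MeasurableEquiv.piCongrLeft (fun _ : Fin n => Ψ) e.symm) := by
    funext x; simp [hMx x]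
  constructor
  · rw [hcomp,
      hM.integrable_comp_emb (MeasurableEquiv.measurableEmbedding _)]
    exact hF
  · rw [hcomp]
    exact hM.integral_comp' F

/-- For a joint density `qj ψ = q(z, ψ)` (for a fixed `z`) with marginal
`qz = ∫ qj > 0`, and any auxiliary density `τ` absolutely continuous w.r.t. `q(·|z)`,
the quantity
`U_K = E_{ψ₀ ~ q(·|z)} E_{ψ₁,…,ψ_K ~ τ i.i.d.} log((K+1)⁻¹ ∑_{k=0}^K qj ψ_k / τ ψ_k)`
satisfies `U_K ≥ log qz`. -/
theorem iwhvi_upper_bound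
    {Ψ : Type*} [MeasurableSpace Ψ] (μ : Measure Ψ) [SigmaFinite μ]
    (qz : ℝ) (qj τ : Ψ → ℝ)
    (hqz : 0 < qz)
    (hqj_nonneg : ∀ ψ, 0 ≤ qj ψ) (hτ_nonneg : ∀ ψ, 0 ≤ τ ψ)
    (hqj_meas : Measurable qj) (hτ_meas : Measurable τ)
    (hmarg : ∫ ψ, qj ψ ∂μ = qz)
    (hτ_prob : ∫ ψ, τ ψ ∂μ = 1)
    (habs : ∀ ψ, τ ψ = 0 → qj ψ = 0)
    (K : ℕ)
    (hint : Integrable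
      (fun ψs : Fin (K + 1) → Ψ =>
        (qj (ψs 0) / qz * ∏ k : Fin K, τ (ψs k.succ)) *
          Real.log (((K : ℝ) + 1)⁻¹ * ∑ k : Fin (K + 1), qj (ψs k) / τ (ψs k)))
      (Measure.pi fun _ : Fin (K + 1) => μ)) :
    Real.log qz ≤
      ∫ ψs : Fin (K + 1) → Ψ,
        (qj (ψs 0) / qz * ∏ k : Fin K, τ (ψs k.succ)) *
          Real.log (((K : ℝ) + 1)⁻¹ * ∑ k : Fin (K + 1), qj (ψs k) / τ (ψs k))
        ∂(Measure.pi fun _ : Fin (K + 1) => μ) := by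
  classical
  set πμ : Measure (Fin (K + 1) → Ψ) := Measure.pi fun _ : Fin (K + 1) => μ with hπμ
  -- basic integrability of qj and τ
  have hqj_int : Integrable qj μ := by
    by_contra h
    rw [integral_undef h] at hmarg
    exact absurd hmarg.symm (ne_of_gt hqz)
  have hτ_int : Integrable τ μ := by
    by_contra h
    rw [integral_undef h] at hτ_prob
    exact one_ne_zero hτ_prob.symm
  -- notation
  set G : (Fin (K + 1) → Ψ) → ℝ :=
    fun x => Real.log (((K : ℝ) + 1)⁻¹ * ∑ k : Fin (K + 1), qj (x k) / τ (x k)) with hG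
  set p : Fin (K + 1) → (Fin (K + 1) → Ψ) → ℝ :=
    fun k x => qj (x k) / qz * ∏ i ∈ Finset.univ.erase k, τ (x i) with hp
  set t : (Fin (K + 1) → Ψ) → ℝ := fun x => ∏ i : Fin (K + 1), τ (x i) with ht
  -- the original integrand equals p 0 * G
  have herase0 : (Finset.univ.erase (0 : Fin (K + 1))) = Finset.univ.image Fin.succ := by
    ext i
    simp [Finset.mem_erase, eq_comm, ← Fin.exists_succ_eq]
  have hp0 : ∀ x : Fin (K + 1) → Ψ,
      qj (x 0) / qz * ∏ k : Fin K, τ (x k.succ) = p 0 x := by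
    intro x
    rw [hp]
    congr 1
    rw [herase0, Finset.prod_image (fun a _ b _ h => Fin.succ_injective _ h)]
  have hint0 : Integrable (fun x => p 0 x * G x) πμ := by
    have : (fun ψs : Fin (K + 1) → Ψ =>
        (qj (ψs 0) / qz * ∏ k : Fin K, τ (ψs k.succ)) *
          Real.log (((K : ℝ) + 1)⁻¹ * ∑ k : Fin (K + 1), qj (ψs k) / τ (ψs k)))
        = fun x => p 0 x * G x := by
      funext x; rw [hp0 x]
    rw [← this]
    exact hint
  -- symmetry: each p k * G has the same integral as p 0 * G
  have hsym : ∀ k : Fin (K + 1),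
      Integrable (fun x => p k x * G x) πμ ∧
        ∫ x, p k x * G x ∂πμ = ∫ x, p 0 x * G x ∂πμ := by
    intro k
    set e : Equiv.Perm (Fin (K + 1)) := Equiv.swap 0 k with he
    have hkey : ∀ x : Fin (K + 1) → Ψ, p 0 (x ∘ e) * G (x ∘ e) = p k x * G x := by
      intro x
      have hGe : G (x ∘ e) = G x := by
        simp only [hG, Function.comp_apply]
        rw [Equiv.sum_comp e (fun j => qj (x j) / τ (x j))]
      have hpe : p 0 (x ∘ e) = p k x := by
        simp only [hp, Function.comp_apply]
        have h0 : e 0 = k := Equiv.swap_apply_left 0 k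
        rw [h0]
        congr 1
        refine Finset.prod_nbij' (fun i => e i) (fun j => e j) ?_ ?_ ?_ ?_ ?_
        · intro a ha
          simp only [Finset.mem_erase, Finset.mem_univ, and_true] at ha ⊢
          intro hc
          exact ha (e.injective (by rw [hc, h0]))
        · intro a ha
          simp only [Finset.mem_erase, Finset.mem_univ, and_true] at ha ⊢
          intro hc
          apply ha
          have : e a = e k := by rw [hc, he, Equiv.swap_apply_right]
          exact e.injective this
        · intro a _; simp [he]
        · intro a _; simp [he]
        · intro a _; rfl
      rw [hGe, hpe]
    obtain ⟨h1, h2⟩ := iw_integral_comp_perm μ e (fun x => p 0 x * G x) hint0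
    constructor
    · have : (fun x : Fin (K + 1) → Ψ => p 0 (x ∘ e) * G (x ∘ e))
          = fun x => p k x * G x := funext hkey
      rw [← this]; exact h1
    · calc ∫ x, p k x * G x ∂πμ = ∫ x, p 0 (x ∘ e) * G (x ∘ e) ∂πμ := by
            congr 1; funext x; rw [hkey x]
        _ = ∫ x, p 0 x * G x ∂πμ := h2
  -- the mixture density
  set m : (Fin (K + 1) → Ψ) → ℝ :=
    fun x => ((K : ℝ) + 1)⁻¹ * ∑ k : Fin (K + 1), p k x with hm
  have hKpos : (0 : ℝ) < (K : ℝ) + 1 := by positivity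
  -- m * G : integrable and value
  have hmG_eq : (fun x => m x * G x)
      = fun x => ∑ k : Fin (K + 1), ((K : ℝ) + 1)⁻¹ * (p k x * G x) := by
    funext x
    simp only [hm]
    rw [mul_assoc, Finset.sum_mul, Finset.mul_sum]
  have hmG_int : Integrable (fun x => m x * G x) πμ := by
    rw [hmG_eq]
    exact integrable_finset_sum _ (fun k _ => ((hsym k).1.const_mul _))
  have hmG_val : ∫ x, m x * G x ∂πμ = ∫ x, p 0 x * G x ∂πμ := by
    rw [hmG_eq, integral_finset_sum _ (fun k _ => ((hsym k).1.const_mul _))]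
    have : ∀ k : Fin (K + 1), ∫ x, ((K : ℝ) + 1)⁻¹ * (p k x * G x) ∂πμ
        = ((K : ℝ) + 1)⁻¹ * ∫ x, p 0 x * G x ∂πμ := by
      intro k
      rw [integral_const_mul, (hsym k).2]
    rw [Finset.sum_congr rfl (fun k _ => this k), Finset.sum_const]
    simp only [Finset.card_univ, Fintype.card_fin, nsmul_eq_mul]
    push_cast
    rw [← mul_assoc, mul_inv_cancel₀ (ne_of_gt hKpos), one_mul]
  -- integrability and integral of each p k
  letI : MeasureSpace Ψ := ⟨μ⟩
  haveI : SigmaFinite (volume : Measure Ψ) := ‹SigmaFinite μ›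
  have hvol : (volume : Measure Ψ) = μ := rfl
  have hπvol : πμ = (volume : Measure (Fin (K + 1) → Ψ)) := by
    rw [hπμ, MeasureTheory.volume_pi]
    rfl
  have hpk_prod : ∀ (k : Fin (K + 1)) (x : Fin (K + 1) → Ψ),
      p k x = ∏ i : Fin (K + 1), (if i = k then qj (x i) / qz else τ (x i)) := by
    intro k x
    rw [← Finset.mul_prod_erase Finset.univ _ (Finset.mem_univ k), if_pos rfl]
    simp only [hp]
    congr 1
    exact (Finset.prod_congr rfl fun i hi => if_neg (Finset.ne_of_mem_erase hi)).symm
  have hfac_int : ∀ (k i : Fin (K + 1)),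
      Integrable (fun ψ => if i = k then qj ψ / qz else τ ψ) μ := by
    intro k i
    by_cases h : i = k
    · simp only [if_pos h]
      exact hqj_int.div_const qz
    · simp only [if_neg h]
      exact hτ_int
  have hfac_val : ∀ (k i : Fin (K + 1)),
      ∫ ψ, (if i = k then qj ψ / qz else τ ψ) ∂μ = 1 := by
    intro k i
    by_cases h : i = k
    · simp only [if_pos h]
      rw [integral_div, hmarg, div_self (ne_of_gt hqz)]
    · simp only [if_neg h]
      exact hτ_prob
  have hpk_int : ∀ k : Fin (K + 1), Integrable (p k) πμ := by
    intro k
    rw [hπvol]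
    have := MeasureTheory.Integrable.fintype_prod
      (f := fun (i : Fin (K + 1)) (ψ : Ψ) => if i = k then qj ψ / qz else τ ψ)
      (fun i => hfac_int k i)
    apply this.congr
    filter_upwards with x
    rw [hpk_prod k x]
  have hpk_val : ∀ k : Fin (K + 1), ∫ x, p k x ∂πμ = 1 := by
    intro k
    rw [hπvol]
    have : ∫ x : Fin (K + 1) → Ψ,
        ∏ i : Fin (K + 1), (if i = k then qj (x i) / qz else τ (x i)) = 1 := by
      rw [MeasureTheory.integral_fintype_prod_volume_eq_prod (ι := Fin (K + 1))
        (fun (i : Fin (K + 1)) (ψ : Ψ) => if i = k then qj ψ / qz else τ ψ)]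
      simp only [hvol]
      rw [Finset.prod_congr rfl (fun i _ => hfac_val k i)]
      simp
    rw [← this]
    congr 1
    funext x
    rw [hpk_prod k x]
  have hm_int : Integrable m πμ := by
    simp only [hm]
    exact (integrable_finset_sum _ (fun k _ => hpk_int k)).const_mul _
  have hm_val : ∫ x, m x ∂πμ = 1 := by
    simp only [hm]
    rw [integral_const_mul, integral_finset_sum _ (fun k _ => hpk_int k)]
    rw [Finset.sum_congr rfl (fun k _ => hpk_val k), Finset.sum_const]
    simp only [Finset.card_univ, Fintype.card_fin, nsmul_eq_mul, mul_one]
    push_cast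
    rw [inv_mul_cancel₀ (ne_of_gt hKpos)]
  -- integrability and integral of t
  have ht_int : Integrable t πμ := by
    rw [hπvol]
    have := MeasureTheory.Integrable.fintype_prod
      (f := fun (_ : Fin (K + 1)) (ψ : Ψ) => τ ψ) (fun _ => hτ_int)
    exact this
  have ht_val : ∫ x, t x ∂πμ = 1 := by
    rw [hπvol]
    simp only [ht]
    rw [MeasureTheory.integral_fintype_prod_volume_eq_pow (ι := Fin (K + 1)) τ]
    simp only [hvol]
    rw [hτ_prob, one_pow]
  -- nonnegativity
  have hpk_nonneg : ∀ (k : Fin (K + 1)) x, 0 ≤ p k x := by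
    intro k x
    simp only [hp]
    apply mul_nonneg (div_nonneg (hqj_nonneg _) hqz.le)
    exact Finset.prod_nonneg fun i _ => hτ_nonneg _
  have hm_nonneg : ∀ x, 0 ≤ m x := fun x =>
    mul_nonneg (by positivity) (Finset.sum_nonneg fun k _ => hpk_nonneg k x)
  have ht_nonneg : ∀ x, 0 ≤ t x := fun x => Finset.prod_nonneg fun i _ => hτ_nonneg _
  -- pointwise inequality
  have hpt : ∀ x, m x - t x ≤ m x * (G x - Real.log qz) := by
    intro x
    rcases eq_or_lt_of_le (hm_nonneg x) with hm0 | hmpos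
    · rw [← hm0]
      simp only [zero_mul, zero_sub]
      linarith [ht_nonneg x]
    · -- m x > 0 : there is k with p k x > 0
      have hex : ∃ k : Fin (K + 1), 0 < p k x := by
        by_contra hc
        push_neg at hc
        have hs : ∑ k : Fin (K + 1), p k x = 0 :=
          le_antisymm (Finset.sum_nonpos fun k _ => hc k)
            (Finset.sum_nonneg fun k _ => hpk_nonneg k x)
        simp only [hm, hs, mul_zero] at hmpos
        exact lt_irrefl _ hmpos
      obtain ⟨k₀, hk₀⟩ := hex
      -- all τ (x i) are positive
      have hτpos : ∀ i : Fin (K + 1), 0 < τ (x i) := by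
        intro i
        rcases eq_or_lt_of_le (hτ_nonneg (x i)) with h0 | h; swap
        · exact h
        by_cases hik : i = k₀
        · -- then qj (x k₀) = 0, so p k₀ x = 0
          exfalso
          have hq0 : qj (x k₀) = 0 := by
            rw [hik] at h0
            exact habs _ h0.symm
          simp only [hp, hq0, zero_div, zero_mul, lt_irrefl] at hk₀
        · exfalso
          have hpr : ∏ j ∈ Finset.univ.erase k₀, τ (x j) = 0 :=
            Finset.prod_eq_zero (Finset.mem_erase.2 ⟨hik, Finset.mem_univ i⟩) h0.symm
          simp only [hp, hpr, mul_zero, lt_irrefl] at hk₀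
      have htpos : 0 < t x := Finset.prod_pos fun i _ => hτpos i
      -- key identity : G x = log qz + log (m x) - log (t x)
      have hw : ∀ k : Fin (K + 1), qj (x k) / τ (x k) = qz * p k x / t x := by
        intro k
        simp only [hp, ht]
        rw [← Finset.mul_prod_erase Finset.univ (fun i => τ (x i)) (Finset.mem_univ k)]
        have hτk := (hτpos k).ne'
        have hprodpos : 0 < ∏ i ∈ Finset.univ.erase k, τ (x i) :=
          Finset.prod_pos fun i _ => hτpos i
        field_simp
      have hsum : ((K : ℝ) + 1)⁻¹ * ∑ k : Fin (K + 1), qj (x k) / τ (x k)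
          = qz * m x / t x := by
        rw [Finset.sum_congr rfl (fun k _ => hw k)]
        simp only [hm]
        have hS : ∑ k : Fin (K + 1), qz * p k x / t x
            = qz * (∑ k : Fin (K + 1), p k x) / t x := by
          rw [Finset.mul_sum, Finset.sum_div]
        rw [hS]
        ring
      have hGx : G x = Real.log qz + Real.log (m x) - Real.log (t x) := by
        simp only [hG]
        rw [hsum, Real.log_div (by positivity) htpos.ne', Real.log_mul hqz.ne' hmpos.ne']
      rw [hGx]
      have hlog : Real.log (t x) - Real.log (m x) ≤ t x / m x - 1 := by
        rw [← Real.log_div htpos.ne' hmpos.ne']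
        exact Real.log_le_sub_one_of_pos (by positivity)
      have := mul_le_mul_of_nonneg_left hlog hmpos.le
      rw [mul_sub, mul_sub, mul_div_cancel₀ _ hmpos.ne', mul_one] at this
      nlinarith
  -- conclude
  have hRHS_eq : (fun x => m x * (G x - Real.log qz))
      = fun x => m x * G x - Real.log qz * m x := by
    funext x; ring
  have hRHS_int : Integrable (fun x => m x * (G x - Real.log qz)) πμ := by
    rw [hRHS_eq]
    exact hmG_int.sub (hm_int.const_mul _)
  have hmono : ∫ x, (m x - t x) ∂πμ ≤ ∫ x, m x * (G x - Real.log qz) ∂πμ :=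
    integral_mono (hm_int.sub ht_int) hRHS_int hpt
  rw [integral_sub hm_int ht_int, hm_val, ht_val] at hmono
  rw [hRHS_eq] at hmono
  rw [integral_sub hmG_int (hm_int.const_mul _), integral_const_mul, hm_val, mul_one,
    hmG_val] at hmono
  have hgoal : (∫ ψs : Fin (K + 1) → Ψ,
        (qj (ψs 0) / qz * ∏ k : Fin K, τ (ψs k.succ)) *
          Real.log (((K : ℝ) + 1)⁻¹ * ∑ k : Fin (K + 1), qj (ψs k) / τ (ψs k))
        ∂(Measure.pi fun _ : Fin (K + 1) => μ))
      = ∫ x, p 0 x * G x ∂πμ := by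
    congr 1
    funext x
    rw [hp0 x]
  rw [hgoal]
  linarith
end

section
/- The gap between U_K and log q(z) equals the KL divergence between the product distribution q(ψ₀|z) ∏_{k=1}^K τ(ψ_k|z) and the distribution ω(ψ_{0:K}|z) defined by ω(ψ_{0:K}|z) = q(ψ₀|z) ∏_{k=1}^K τ(ψ_k|z) / ( (1/(K+1)) Σ_{k=0}^K q(ψ_k|z)/τ(ψ_k|z) ): that is, U_K − log q(z) = D_KL( q(ψ₀|z) τ(ψ_{1:K}|z) ‖ ω(ψ_{0:K}|z) ) ≥ 0. -/
open MeasureTheory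

/-- the gap `U_K − log q(z)` equals the KL divergence between the density
`p₁(ψ_{0:K}) = q(ψ₀|z) ∏_{k=1}^K τ(ψ_k|z)` and
`ω(ψ_{0:K}) = p₁(ψ_{0:K}) / ((K+1)⁻¹ ∑_k q(ψ_k|z)/τ(ψ_k|z))`, and in particular is
nonnegative.  Here `q(ψ|z) = qj ψ / qz` and `q(z,ψ) = qj ψ`. -/
theorem iwhvi_gap_eq_kl
    {Ψ : Type*} [MeasurableSpace Ψ] (μ : Measure Ψ) [SigmaFinite μ]
    (qz : ℝ) (qj τ : Ψ → ℝ)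
    (hqz : 0 < qz)
    (hqj_nonneg : ∀ ψ, 0 ≤ qj ψ) (hτ_nonneg : ∀ ψ, 0 ≤ τ ψ)
    (hqj_meas : Measurable qj) (hτ_meas : Measurable τ)
    (hmarg : ∫ ψ, qj ψ ∂μ = qz)
    (hτ_prob : ∫ ψ, τ ψ ∂μ = 1)
    (habs : ∀ ψ, τ ψ = 0 → qj ψ = 0)
    (K : ℕ)
    (p₁ ω : (Fin (K + 1) → Ψ) → ℝ)
    (hp₁ : ∀ ψs, p₁ ψs = qj (ψs 0) / qz * ∏ k : Fin K, τ (ψs k.succ))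
    (hω : ∀ ψs, ω ψs =
      p₁ ψs / (((K : ℝ) + 1)⁻¹ * ∑ k : Fin (K + 1), (qj (ψs k) / qz) / τ (ψs k)))
    (hint : Integrable
      (fun ψs : Fin (K + 1) → Ψ =>
        p₁ ψs * Real.log (((K : ℝ) + 1)⁻¹ * ∑ k : Fin (K + 1), qj (ψs k) / τ (ψs k)))
      (Measure.pi fun _ : Fin (K + 1) => μ))
    (hintKL : Integrable
      (fun ψs : Fin (K + 1) → Ψ => p₁ ψs * Real.log (p₁ ψs / ω ψs))
      (Measure.pi fun _ : Fin (K + 1) => μ)) :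
    (∫ ψs : Fin (K + 1) → Ψ,
        p₁ ψs * Real.log (((K : ℝ) + 1)⁻¹ * ∑ k : Fin (K + 1), qj (ψs k) / τ (ψs k))
        ∂(Measure.pi fun _ : Fin (K + 1) => μ)) - Real.log qz =
      (∫ ψs : Fin (K + 1) → Ψ, p₁ ψs * Real.log (p₁ ψs / ω ψs)
        ∂(Measure.pi fun _ : Fin (K + 1) => μ)) ∧
    0 ≤ ∫ ψs : Fin (K + 1) → Ψ, p₁ ψs * Real.log (p₁ ψs / ω ψs)
        ∂(Measure.pi fun _ : Fin (K + 1) => μ) := by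
  classical
  letI : MeasureSpace Ψ := ⟨μ⟩
  haveI : SigmaFinite (volume : Measure Ψ) := ‹SigmaFinite μ›
  set π : Measure (Fin (K + 1) → Ψ) := Measure.pi fun _ : Fin (K + 1) => μ with hπdef
  have hπvol : π = (volume : Measure (Fin (K + 1) → Ψ)) := by
    rw [hπdef, volume_pi]; rfl
  have hK1 : (0 : ℝ) < (K : ℝ) + 1 := by positivity
  -- basic integrability
  have hτ_int : Integrable τ μ := by
    by_contra h
    rw [integral_undef h] at hτ_prob; norm_num at hτ_prob
  have hqj_int : Integrable qj μ := by
    by_contra h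
    rw [integral_undef h] at hmarg; exact hqz.ne' hmarg.symm
  -- abbreviations
  set S : (Fin (K + 1) → Ψ) → ℝ :=
    fun ψs => ((K : ℝ) + 1)⁻¹ * ∑ k : Fin (K + 1), (qj (ψs k) / qz) / τ (ψs k) with hSdef
  set P : (Fin (K + 1) → Ψ) → ℝ := fun ψs => ∏ k : Fin (K + 1), τ (ψs k) with hPdef
  have hωS : ∀ ψs, ω ψs = p₁ ψs / S ψs := hω
  have hp₁_nonneg : ∀ ψs, 0 ≤ p₁ ψs := by
    intro ψs; rw [hp₁]
    exact mul_nonneg (div_nonneg (hqj_nonneg _) hqz.le)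
      (Finset.prod_nonneg fun k _ => hτ_nonneg _)
  have hw_nonneg : ∀ (ψs : Fin (K + 1) → Ψ) (k : Fin (K + 1)),
      0 ≤ (qj (ψs k) / qz) / τ (ψs k) :=
    fun ψs k => div_nonneg (div_nonneg (hqj_nonneg _) hqz.le) (hτ_nonneg _)
  have hS_nonneg : ∀ ψs, 0 ≤ S ψs := fun ψs =>
    mul_nonneg (inv_nonneg.mpr hK1.le) (Finset.sum_nonneg fun k _ => hw_nonneg ψs k)
  have hP_nonneg : ∀ ψs, 0 ≤ P ψs := fun ψs => Finset.prod_nonneg fun k _ => hτ_nonneg _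
  have hω_nonneg : ∀ ψs, 0 ≤ ω ψs := by
    intro ψs; rw [hωS]; exact div_nonneg (hp₁_nonneg _) (hS_nonneg _)
  have hS_pos : ∀ ψs, p₁ ψs ≠ 0 → 0 < S ψs := by
    intro ψs hne
    rw [hp₁] at hne
    have hq0 : qj (ψs 0) ≠ 0 := fun h => hne (by simp [h])
    have hτ0 : 0 < τ (ψs 0) :=
      (hτ_nonneg _).lt_of_ne fun h => hq0 (habs _ h.symm)
    have h0 : 0 < (qj (ψs 0) / qz) / τ (ψs 0) :=
      div_pos (div_pos ((hqj_nonneg _).lt_of_ne (Ne.symm hq0)) hqz) hτ0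
    have hle : (qj (ψs 0) / qz) / τ (ψs 0)
        ≤ ∑ k : Fin (K + 1), (qj (ψs k) / qz) / τ (ψs k) :=
      Finset.single_le_sum (fun k _ => hw_nonneg ψs k) (Finset.mem_univ 0)
    exact mul_pos (inv_pos.mpr hK1) (lt_of_lt_of_le h0 hle)
  have hratio : ∀ ψs, p₁ ψs ≠ 0 → p₁ ψs / ω ψs = S ψs := by
    intro ψs hne
    rw [hωS, div_div_eq_mul_div, mul_comm, mul_div_assoc, div_self hne, mul_one]
  have hTS : ∀ ψs, ((K : ℝ) + 1)⁻¹ * ∑ k : Fin (K + 1), qj (ψs k) / τ (ψs k)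
      = qz * S ψs := by
    intro ψs
    have hterm' : ∀ k : Fin (K + 1), qj (ψs k) / τ (ψs k)
        = qz * (qj (ψs k) / qz / τ (ψs k)) := by
      intro k
      rw [div_div, ← mul_div_assoc, mul_div_mul_left _ _ hqz.ne']
    rw [hSdef]
    simp only
    simp_rw [hterm']
    rw [← Finset.mul_sum, mul_left_comm]
  -- pointwise identity for the equality part
  have heq : ∀ ψs, p₁ ψs * Real.log (p₁ ψs / ω ψs)
      = p₁ ψs * Real.log (((K : ℝ) + 1)⁻¹ * ∑ k : Fin (K + 1), qj (ψs k) / τ (ψs k))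
        - Real.log qz * p₁ ψs := by
    intro ψs
    by_cases hne : p₁ ψs = 0
    · simp [hne]
    · rw [hratio ψs hne, hTS ψs, Real.log_mul hqz.ne' (hS_pos ψs hne).ne']
      ring
  -- swap machinery
  set σ : Fin (K + 1) → (Fin (K + 1) → Ψ) → (Fin (K + 1) → Ψ) :=
    fun j ψs i => ψs (Equiv.swap 0 j i) with hσdef
  have hterm : ∀ (ψs) (j : Fin (K + 1)),
      p₁ (σ j ψs) = ((qj (ψs j) / qz) / τ (ψs j)) * P ψs := by
    intro ψs j
    have hswap0 : Equiv.swap (0 : Fin (K + 1)) j 0 = j := Equiv.swap_apply_left 0 j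
    by_cases hτj : τ (ψs j) = 0
    · have hqj0 : qj (ψs j) = 0 := habs _ hτj
      rw [hp₁]
      simp [hσdef, hswap0, hqj0, hτj]
    · have h2 : ∏ k : Fin (K + 1), τ (ψs (Equiv.swap 0 j k)) = P ψs :=
        Equiv.prod_comp (Equiv.swap 0 j) fun k => τ (ψs k)
      rw [Fin.prod_univ_succ, hswap0] at h2
      have hmul : p₁ (σ j ψs) * τ (ψs j) = qj (ψs j) / qz * P ψs := by
        rw [hp₁]
        show qj (ψs (Equiv.swap 0 j 0)) / qz
            * (∏ k : Fin K, τ (ψs (Equiv.swap 0 j k.succ))) * τ (ψs j) = _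
        rw [hswap0, mul_assoc, mul_comm (∏ k : Fin K, τ (ψs (Equiv.swap 0 j k.succ))), h2]
      rw [div_mul_eq_mul_div, eq_div_iff hτj]
      exact hmul
  have hS_symm : ∀ (ψs) (j : Fin (K + 1)), S (σ j ψs) = S ψs := by
    intro ψs j
    rw [hSdef]
    simp only
    congr 1
    exact Equiv.sum_comp (Equiv.swap 0 j) fun k => (qj (ψs k) / qz) / τ (ψs k)
  have hω_swap : ∀ (ψs) (j : Fin (K + 1)), ω (σ j ψs) = p₁ (σ j ψs) / S ψs := by
    intro ψs j
    rw [hωS, hS_symm]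
  have hsum : ∀ ψs, (∑ j : Fin (K + 1), p₁ (σ j ψs))
      = (((K : ℝ) + 1) * S ψs) * P ψs := by
    intro ψs
    calc (∑ j : Fin (K + 1), p₁ (σ j ψs))
        = ∑ j : Fin (K + 1), ((qj (ψs j) / qz) / τ (ψs j)) * P ψs :=
          Finset.sum_congr rfl fun j _ => hterm ψs j
      _ = (∑ j : Fin (K + 1), (qj (ψs j) / qz) / τ (ψs j)) * P ψs :=
          (Finset.sum_mul _ _ _).symm
      _ = (((K : ℝ) + 1) * S ψs) * P ψs := by
          rw [hSdef]; simp only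
          rw [← mul_assoc, mul_inv_cancel₀ hK1.ne', one_mul]
  have hsum_ω : ∀ ψs, (∑ j : Fin (K + 1), ω (σ j ψs)) ≤ ((K : ℝ) + 1) * P ψs := by
    intro ψs
    have h1 : (∑ j : Fin (K + 1), ω (σ j ψs))
        = (((K : ℝ) + 1) * S ψs) * P ψs / S ψs := by
      calc (∑ j : Fin (K + 1), ω (σ j ψs))
          = ∑ j : Fin (K + 1), p₁ (σ j ψs) / S ψs :=
            Finset.sum_congr rfl fun j _ => hω_swap ψs j
        _ = (∑ j : Fin (K + 1), p₁ (σ j ψs)) / S ψs := (Finset.sum_div _ _ _).symm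
        _ = _ := by rw [hsum]
    rw [h1]
    by_cases hS0 : S ψs = 0
    · rw [hS0, div_zero]
      exact mul_nonneg hK1.le (hP_nonneg ψs)
    · have : (((K : ℝ) + 1) * S ψs) * P ψs / S ψs = ((K : ℝ) + 1) * P ψs := by
        field_simp
      rw [this]
  -- measurability
  have hp₁_meas : Measurable p₁ := by
    rw [funext hp₁]
    exact ((hqj_meas.comp (measurable_pi_apply 0)).div_const qz).mul
      (Finset.measurable_prod _ fun k _ => hτ_meas.comp (measurable_pi_apply _))
  have hS_meas : Measurable S := by
    rw [hSdef]
    exact measurable_const.mul (Finset.measurable_sum _ fun k _ =>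
      ((hqj_meas.comp (measurable_pi_apply k)).div_const qz).div
        (hτ_meas.comp (measurable_pi_apply k)))
  have hω_meas : Measurable ω := by
    rw [funext hωS]
    exact hp₁_meas.div hS_meas
  -- integral of P
  have hP_int : Integrable P π := by
    rw [hπvol, hPdef]
    exact Integrable.fin_nat_prod (f := fun _ : Fin (K + 1) => τ) fun _ => hτ_int
  have hP_integral : ∫ ψs, P ψs ∂π = 1 := by
    rw [hπvol, hPdef]
    rw [volume_pi, MeasureTheory.integral_fin_nat_prod_eq_prod (f := fun _ : Fin (K + 1) => τ)]
    have h2 : ∫ (x : Ψ), τ x = 1 := hτ_prob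
    simp [h2]
  -- integral of p₁
  set g : Fin (K + 1) → Ψ → ℝ := Fin.cases (fun ψ => qj ψ / qz) (fun _ => τ) with hgdef
  have hp₁_prod : p₁ = fun ψs => ∏ k : Fin (K + 1), g k (ψs k) := by
    funext ψs
    rw [hp₁, Fin.prod_univ_succ]
    simp [hgdef]
  have hg_int : ∀ k, Integrable (g k) μ := by
    intro k
    induction k using Fin.cases with
    | zero => simpa [hgdef] using hqj_int.div_const qz
    | succ i => simpa [hgdef] using hτ_int
  have hp₁_int : Integrable p₁ π := by
    rw [hπvol, hp₁_prod]
    exact Integrable.fin_nat_prod fun k => hg_int k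
  have hp₁_integral : ∫ ψs, p₁ ψs ∂π = 1 := by
    rw [hπvol, hp₁_prod, volume_pi, MeasureTheory.integral_fin_nat_prod_eq_prod, Fin.prod_univ_succ]
    have h1 : ∫ (x : Ψ), qj x = qz := hmarg
    have h2 : ∫ (x : Ψ), τ x = 1 := hτ_prob
    simp [hgdef, integral_div, h1, h2, div_self hqz.ne']
  -- ω is integrable
  have hω_le : ∀ ψs, ω ψs ≤ ((K : ℝ) + 1) * P ψs := by
    intro ψs
    have h0 : ω ψs = ω (σ 0 ψs) := by
      congr 1; funext i; simp [hσdef]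
    calc ω ψs = ω (σ 0 ψs) := h0
      _ ≤ ∑ j : Fin (K + 1), ω (σ j ψs) :=
        Finset.single_le_sum (f := fun j : Fin (K + 1) => ω (σ j ψs))
          (fun j _ => hω_nonneg _) (Finset.mem_univ 0)
      _ ≤ _ := hsum_ω ψs
  have hω_int : Integrable ω π := by
    refine Integrable.mono (hP_int.const_mul ((K : ℝ) + 1))
      hω_meas.aestronglyMeasurable (Filter.Eventually.of_forall fun ψs => ?_)
    rw [Real.norm_eq_abs, Real.norm_eq_abs, abs_of_nonneg (hω_nonneg _),
      abs_of_nonneg (mul_nonneg hK1.le (hP_nonneg _))]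
    exact hω_le ψs
  -- permutation invariance
  have he : ∀ (j : Fin (K + 1)) (ψs : Fin (K + 1) → Ψ),
      (MeasurableEquiv.piCongrLeft (fun _ : Fin (K + 1) => Ψ) (Equiv.swap 0 j)) ψs
        = σ j ψs := by
    intro j ψs
    funext i
    rw [MeasurableEquiv.coe_piCongrLeft]
    have := Equiv.piCongrLeft_apply_apply (P := fun _ : Fin (K + 1) => Ψ)
      (Equiv.swap 0 j) ψs (Equiv.swap 0 j i)
    simp only [Equiv.swap_apply_self, hσdef] at this ⊢; exact this
  have hmp : ∀ j : Fin (K + 1),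
      MeasurePreserving (MeasurableEquiv.piCongrLeft (fun _ : Fin (K + 1) => Ψ)
        (Equiv.swap 0 j)) π π :=
    fun j => measurePreserving_piCongrLeft (fun _ : Fin (K + 1) => μ) (Equiv.swap 0 j)
  have hω_comp_integral : ∀ j : Fin (K + 1),
      ∫ ψs, ω (σ j ψs) ∂π = ∫ ψs, ω ψs ∂π := by
    intro j
    have h := (hmp j).integral_comp' ω
    calc ∫ ψs, ω (σ j ψs) ∂π
        = ∫ ψs, ω ((MeasurableEquiv.piCongrLeft (fun _ : Fin (K + 1) => Ψ)
            (Equiv.swap 0 j)) ψs) ∂π := by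
          refine integral_congr_ae (Filter.Eventually.of_forall fun ψs => ?_)
          exact congrArg ω (he j ψs).symm
      _ = ∫ ψs, ω ψs ∂π := h
  have hω_comp_int : ∀ j : Fin (K + 1), Integrable (fun ψs => ω (σ j ψs)) π := by
    intro j
    have h := ((hmp j).integrable_comp hω_meas.aestronglyMeasurable).mpr hω_int
    refine h.congr (Filter.Eventually.of_forall fun ψs => ?_)
    exact congrArg ω (he j ψs)
  have hωint_le : ∫ ψs, ω ψs ∂π ≤ 1 := by
    have h1 : ((K : ℝ) + 1) * ∫ ψs, ω ψs ∂π = ∫ ψs, ∑ j : Fin (K + 1), ω (σ j ψs) ∂π := by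
      rw [integral_finset_sum _ fun j _ => hω_comp_int j]
      simp only [hω_comp_integral]
      rw [Finset.sum_const, Finset.card_univ, Fintype.card_fin, nsmul_eq_mul]
      push_cast; ring
    have h2 : ∫ ψs, ∑ j : Fin (K + 1), ω (σ j ψs) ∂π
        ≤ ∫ ψs, ((K : ℝ) + 1) * P ψs ∂π :=
      integral_mono (integrable_finset_sum _ fun j _ => hω_comp_int j)
        (hP_int.const_mul _) hsum_ω
    rw [integral_const_mul, hP_integral, mul_one] at h2
    rw [← h1] at h2
    have := (mul_le_mul_iff_right₀ hK1).mp (by linarith [h2] : ((K : ℝ) + 1) * ∫ ψs, ω ψs ∂π ≤ ((K : ℝ) + 1) * 1)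
    linarith
  -- pointwise inequality
  have hpt : ∀ ψs, p₁ ψs - ω ψs ≤ p₁ ψs * Real.log (p₁ ψs / ω ψs) := by
    intro ψs
    by_cases hne : p₁ ψs = 0
    · rw [hne]; simpa using hω_nonneg ψs
    · have hp : 0 < p₁ ψs := (hp₁_nonneg ψs).lt_of_ne (Ne.symm hne)
      have hωp : 0 < ω ψs := by
        rw [hωS]; exact div_pos hp (hS_pos ψs hne)
      have hlog : Real.log (ω ψs / p₁ ψs) ≤ ω ψs / p₁ ψs - 1 :=
        Real.log_le_sub_one_of_pos (div_pos hωp hp)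
      rw [Real.log_div hωp.ne' hp.ne'] at hlog
      rw [Real.log_div hne hωp.ne', mul_sub]
      have h2 := mul_le_mul_of_nonneg_left hlog hp.le
      have hcan : p₁ ψs * (ω ψs / p₁ ψs) = ω ψs := by field_simp
      rw [mul_sub, mul_sub, mul_one, hcan] at h2
      linarith
  constructor
  · rw [funext heq, integral_sub hint ((hp₁_int.const_mul (Real.log qz))),
      integral_const_mul, hp₁_integral, mul_one]
  · calc (0 : ℝ) ≤ 1 - ∫ ψs, ω ψs ∂π := by linarith
      _ = (∫ ψs, p₁ ψs ∂π) - ∫ ψs, ω ψs ∂π := by rw [hp₁_integral]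
      _ = ∫ ψs, p₁ ψs - ω ψs ∂π := (integral_sub hp₁_int hω_int).symm
      _ ≤ _ := integral_mono (hp₁_int.sub hω_int) hintKL hpt
end

section
/- The difference U_K − U_{K+1} equals the KL divergence D_KL( q(ψ₀|z) ∏_{k=1}^{K+1} τ(ψ_k|z) ‖ ν(ψ_{0:K+1}|z) ), where ν(ψ_{0:K+1}|z) = ω(ψ_{0:K}|z) τ(ψ_{K+1}|z) (1/(K+2)) Σ_{k=0}^{K+1} q(ψ_k|z)/τ(ψ_k|z). In particular U_K − U_{K+1} ≥ 0. -/
open MeasureTheory Finset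

section IWHVIAux

variable {Ψ : Type*} [MeasurableSpace Ψ] {μ : Measure Ψ} [SigmaFinite μ]

/-- Product over all-but-`0` indices equals product over successors. -/
lemma iwhvi_prod_erase_zero {n : ℕ} {M : Type*} [CommMonoid M] (f : Fin (n + 1) → M) :
    (∏ k : Fin n, f k.succ) = ∏ i ∈ Finset.univ.erase (0 : Fin (n + 1)), f i := by
  have himg : (Finset.univ.erase (0 : Fin (n + 1))) = Finset.univ.image Fin.succ := by
    ext i
    simp only [Finset.mem_erase, Finset.mem_univ, and_true, Finset.mem_image, true_and]
    constructor
    · intro hi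
      exact Fin.exists_succ_eq.2 hi
    · rintro ⟨k, rfl⟩
      exact Fin.succ_ne_zero k
  rw [himg, Finset.prod_image (fun x _ y _ h => Fin.succ_injective _ h)]

/-- Change of variables under a permutation of coordinates for `Measure.pi`. -/
lemma iwhvi_perm_integral {n : ℕ} (e : Equiv.Perm (Fin n)) (F : (Fin n → Ψ) → ℝ) :
    ∫ x : Fin n → Ψ, F (fun i => x (e i)) ∂(Measure.pi fun _ => μ)
      = ∫ x : Fin n → Ψ, F x ∂(Measure.pi fun _ => μ) := by
  have MP := MeasureTheory.measurePreserving_piCongrLeft (fun _ : Fin n => μ) e.symm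
  have h := MP.integral_comp' F
  rw [← h]
  refine integral_congr_ae (Filter.Eventually.of_forall fun x => ?_)
  show F (fun i => x (e i)) = F ((MeasurableEquiv.piCongrLeft (fun _ => Ψ) e.symm) x)
  congr 1
  funext i
  have h2 := Equiv.piCongrLeft_apply_apply (fun _ : Fin n => Ψ) e.symm x (e i)
  simp only [Equiv.symm_apply_apply] at h2
  simp only [MeasurableEquiv.coe_piCongrLeft]
  exact h2.symm

/-- Peeling off the last coordinate: pointwise product version. -/
lemma iwhvi_peel_last_integral {n : ℕ} (φ : Ψ → ℝ) (g : (Fin (n + 1) → Ψ) → ℝ) :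
    ∫ ψs : Fin (n + 2) → Ψ, φ (ψs (Fin.last (n + 1))) * g (fun k => ψs k.castSucc)
        ∂(Measure.pi fun _ => μ)
      = (∫ y, φ y ∂μ) * ∫ x : Fin (n + 1) → Ψ, g x ∂(Measure.pi fun _ => μ) := by
  have MP := MeasureTheory.measurePreserving_piFinSuccAbove (fun _ : Fin (n + 2) => μ)
    (Fin.last (n + 1))
  have h := MP.integral_comp' (fun p : Ψ × (Fin (n + 1) → Ψ) => φ p.1 * g p.2)
  have happ : ∀ ψs : Fin (n + 2) → Ψ,
      (MeasurableEquiv.piFinSuccAbove (fun _ : Fin (n + 2) => Ψ) (Fin.last (n + 1))) ψs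
        = (ψs (Fin.last (n + 1)), fun k => ψs k.castSucc) := by
    intro ψs
    refine Prod.ext ?_ ?_
    · rfl
    · funext k
      show ψs ((Fin.last (n + 1)).succAbove k) = ψs k.castSucc
      rw [Fin.succAbove_last]
  rw [← integral_prod_mul, ← h]
  refine integral_congr_ae (Filter.Eventually.of_forall fun ψs => ?_)
  simp only [happ]

/-- Peeling off the last coordinate: integrability version. -/
lemma iwhvi_peel_last_integrable {n : ℕ} {φ : Ψ → ℝ} {g : (Fin (n + 1) → Ψ) → ℝ}
    (hφ : Integrable φ μ) (hg : Integrable g (Measure.pi fun _ => μ)) :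
    Integrable
      (fun ψs : Fin (n + 2) → Ψ => φ (ψs (Fin.last (n + 1))) * g (fun k => ψs k.castSucc))
      (Measure.pi fun _ => μ) := by
  have MP := MeasureTheory.measurePreserving_piFinSuccAbove (fun _ : Fin (n + 2) => μ)
    (Fin.last (n + 1))
  have hint : Integrable (fun p : Ψ × (Fin (n + 1) → Ψ) => φ p.1 * g p.2)
      (μ.prod (Measure.pi fun _ => μ)) := hφ.mul_prod hg
  have h := (MP.integrable_comp_emb
    (MeasurableEquiv.piFinSuccAbove (fun _ : Fin (n + 2) => Ψ)
      (Fin.last (n + 1))).measurableEmbedding).2 hint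
  have happ : ∀ ψs : Fin (n + 2) → Ψ,
      (MeasurableEquiv.piFinSuccAbove (fun _ : Fin (n + 2) => Ψ) (Fin.last (n + 1))) ψs
        = (ψs (Fin.last (n + 1)), fun k => ψs k.castSucc) := by
    intro ψs
    refine Prod.ext ?_ ?_
    · rfl
    · funext k
      show ψs ((Fin.last (n + 1)).succAbove k) = ψs k.castSucc
      rw [Fin.succAbove_last]
  refine h.congr (Filter.Eventually.of_forall fun ψs => ?_)
  simp only [Function.comp_apply, happ]

end IWHVIAux

set_option maxHeartbeats 2000000 in
/-- `U_K − U_{K+1} = D_KL( q(ψ₀|z) ∏_{k=1}^{K+1} τ(ψ_k|z) ‖ ν(ψ_{0:K+1}|z) )`,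
where `ν(ψ_{0:K+1}) = ω(ψ_{0:K}) τ(ψ_{K+1}) (K+2)⁻¹ Σ_{k=0}^{K+1} q(ψ_k|z)/τ(ψ_k|z)`.
In particular `U_K − U_{K+1} ≥ 0`.  Here `qj ψ = q(z,ψ)`, `qz = q(z)`, `q(ψ|z) = qj ψ / qz`. -/
theorem iwhvi_successive_gap_eq_kl
    {Ψ : Type*} [MeasurableSpace Ψ] (μ : Measure Ψ) [SigmaFinite μ]
    (qz : ℝ) (qj τ : Ψ → ℝ)
    (hqz : 0 < qz)
    (hqj_nonneg : ∀ ψ, 0 ≤ qj ψ) (hτ_nonneg : ∀ ψ, 0 ≤ τ ψ)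
    (hqj_meas : Measurable qj) (hτ_meas : Measurable τ)
    (hmarg : ∫ ψ, qj ψ ∂μ = qz)
    (hτ_prob : ∫ ψ, τ ψ ∂μ = 1)
    (habs : ∀ ψ, τ ψ = 0 → qj ψ = 0)
    (U : ℕ → ℝ)
    (hU : ∀ n : ℕ, U n =
      ∫ ψs : Fin (n + 1) → Ψ,
        (qj (ψs 0) / qz * ∏ k : Fin n, τ (ψs k.succ)) *
          Real.log (((n : ℝ) + 1)⁻¹ * ∑ k : Fin (n + 1), qj (ψs k) / τ (ψs k))
        ∂(Measure.pi fun _ : Fin (n + 1) => μ))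
    (hint : ∀ n : ℕ, Integrable
      (fun ψs : Fin (n + 1) → Ψ =>
        (qj (ψs 0) / qz * ∏ k : Fin n, τ (ψs k.succ)) *
          Real.log (((n : ℝ) + 1)⁻¹ * ∑ k : Fin (n + 1), qj (ψs k) / τ (ψs k)))
      (Measure.pi fun _ : Fin (n + 1) => μ))
    (K : ℕ)
    (p₁ ν : (Fin (K + 2) → Ψ) → ℝ)
    (hp₁ : ∀ ψs, p₁ ψs = qj (ψs 0) / qz * ∏ k : Fin (K + 1), τ (ψs k.succ))
    (hν : ∀ ψs : Fin (K + 2) → Ψ, ν ψs =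
      ((qj (ψs 0) / qz) * (∏ k : Fin K, τ (ψs k.succ.castSucc)) /
          (((K : ℝ) + 1)⁻¹ *
            ∑ k : Fin (K + 1), (qj (ψs k.castSucc) / qz) / τ (ψs k.castSucc))) *
        τ (ψs (Fin.last (K + 1))) *
        (((K : ℝ) + 2)⁻¹ * ∑ k : Fin (K + 2), (qj (ψs k) / qz) / τ (ψs k)))
    (hintKL : Integrable
      (fun ψs : Fin (K + 2) → Ψ => p₁ ψs * Real.log (p₁ ψs / ν ψs))
      (Measure.pi fun _ : Fin (K + 2) => μ)) :
    U K - U (K + 1) =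
      (∫ ψs : Fin (K + 2) → Ψ, p₁ ψs * Real.log (p₁ ψs / ν ψs)
        ∂(Measure.pi fun _ : Fin (K + 2) => μ)) ∧
    0 ≤ U K - U (K + 1) := by
  classical
  set π2 : Measure (Fin (K + 2) → Ψ) := Measure.pi fun _ => μ with hπ2
  set π1 : Measure (Fin (K + 1) → Ψ) := Measure.pi fun _ => μ with hπ1
  set S1 : (Fin (K + 1) → Ψ) → ℝ :=
    fun x => ((K : ℝ) + 1)⁻¹ * ∑ k : Fin (K + 1), qj (x k) / τ (x k) with hS1
  set S2 : (Fin (K + 2) → Ψ) → ℝ :=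
    fun x => ((K : ℝ) + 2)⁻¹ * ∑ k : Fin (K + 2), qj (x k) / τ (x k) with hS2
  set pK : (Fin (K + 1) → Ψ) → ℝ :=
    fun x => qj (x 0) / qz * ∏ k : Fin K, τ (x k.succ) with hpK
  set front : (Fin (K + 2) → Ψ) → (Fin (K + 1) → Ψ) :=
    fun ψs k => ψs k.castSucc with hfront
  set f : (Fin (K + 2) → Ψ) → ℝ :=
    fun ψs => p₁ ψs * Real.log (p₁ ψs / ν ψs) with hf
  set f1 : (Fin (K + 2) → Ψ) → ℝ := fun ψs => p₁ ψs * Real.log (S1 (front ψs)) with hf1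
  set f2 : (Fin (K + 2) → Ψ) → ℝ := fun ψs => p₁ ψs * Real.log (S2 ψs) with hf2
  have hK1 : ((K : ℝ) + 1) ≠ 0 := by positivity
  have hK2 : ((K : ℝ) + 2) ≠ 0 := by positivity
  have hp₁_nonneg : ∀ ψs, 0 ≤ p₁ ψs := by
    intro ψs; rw [hp₁]
    exact mul_nonneg (div_nonneg (hqj_nonneg _) hqz.le)
      (Finset.prod_nonneg fun _ _ => hτ_nonneg _)
  have hS1_nonneg : ∀ x, 0 ≤ S1 x := fun x =>
    mul_nonneg (by positivity)
      (Finset.sum_nonneg fun k _ => div_nonneg (hqj_nonneg _) (hτ_nonneg _))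
  have hS2_nonneg : ∀ x, 0 ≤ S2 x := fun x =>
    mul_nonneg (by positivity)
      (Finset.sum_nonneg fun k _ => div_nonneg (hqj_nonneg _) (hτ_nonneg _))
  have hpK_nonneg : ∀ x, 0 ≤ pK x := fun x =>
    mul_nonneg (div_nonneg (hqj_nonneg _) hqz.le) (Finset.prod_nonneg fun _ _ => hτ_nonneg _)
  -- product split over Fin (K+1)
  have hprod_split : ∀ ψs : Fin (K + 2) → Ψ,
      (∏ k : Fin (K + 1), τ (ψs k.succ))
        = (∏ k : Fin K, τ (ψs k.succ.castSucc)) * τ (ψs (Fin.last (K + 1))) := by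
    intro ψs
    rw [Fin.prod_univ_castSucc (f := fun k : Fin (K + 1) => τ (ψs k.succ))]
    simp only [Fin.succ_castSucc, Fin.succ_last]
  have hp₁_split : ∀ ψs, p₁ ψs = pK (front ψs) * τ (ψs (Fin.last (K + 1))) := by
    intro ψs
    rw [hp₁, hprod_split]
    simp only [hpK, hfront]
    rw [Fin.castSucc_zero]
    ring
  have hsum_split : ∀ ψs : Fin (K + 2) → Ψ,
      (∑ k : Fin (K + 2), qj (ψs k) / τ (ψs k))
        = (∑ k : Fin (K + 1), qj (ψs k.castSucc) / τ (ψs k.castSucc))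
          + qj (ψs (Fin.last (K + 1))) / τ (ψs (Fin.last (K + 1))) :=
    fun ψs => Fin.sum_univ_castSucc (f := fun k : Fin (K + 2) => qj (ψs k) / τ (ψs k))
  -- positivity pack at points where p₁ ≠ 0, and formula for ν
  have hkey : ∀ ψs : Fin (K + 2) → Ψ, p₁ ψs ≠ 0 →
      0 < S1 (front ψs) ∧ 0 < S2 ψs ∧ τ (ψs (Fin.last (K + 1))) ≠ 0 ∧
        ν ψs = p₁ ψs * S2 ψs / S1 (front ψs) := by
    intro ψs hp
    rw [hp₁] at hp
    have hq0 : qj (ψs 0) ≠ 0 := by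
      intro h; apply hp; rw [h]; simp
    have hτprod : (∏ k : Fin (K + 1), τ (ψs k.succ)) ≠ 0 := by
      intro h; apply hp; rw [h]; simp
    have hτlast : τ (ψs (Fin.last (K + 1))) ≠ 0 := by
      have h2 := (Finset.prod_ne_zero_iff.1 hτprod) (Fin.last K) (Finset.mem_univ _)
      rwa [Fin.succ_last] at h2
    have hτ0 : τ (ψs 0) ≠ 0 := fun h => hq0 (habs _ h)
    have hterm0 : 0 < qj (ψs 0) / τ (ψs 0) :=
      div_pos ((hqj_nonneg _).lt_of_ne' hq0) ((hτ_nonneg _).lt_of_ne' hτ0)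
    have hS1pos : 0 < S1 (front ψs) := by
      have hle : qj (front ψs 0) / τ (front ψs 0)
          ≤ ∑ k : Fin (K + 1), qj (front ψs k) / τ (front ψs k) :=
        Finset.single_le_sum (f := fun k : Fin (K + 1) => qj (front ψs k) / τ (front ψs k))
          (fun k _ => div_nonneg (hqj_nonneg _) (hτ_nonneg _)) (Finset.mem_univ 0)
      have h0 : qj (front ψs 0) / τ (front ψs 0) = qj (ψs 0) / τ (ψs 0) := by
        simp [hfront]
      rw [h0] at hle
      simp only [hS1]
      exact mul_pos (by positivity) (lt_of_lt_of_le hterm0 hle)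
    have hS2pos : 0 < S2 ψs := by
      have hle : qj (ψs 0) / τ (ψs 0) ≤ ∑ k : Fin (K + 2), qj (ψs k) / τ (ψs k) :=
        Finset.single_le_sum (f := fun k : Fin (K + 2) => qj (ψs k) / τ (ψs k))
          (fun k _ => div_nonneg (hqj_nonneg _) (hτ_nonneg _)) (Finset.mem_univ 0)
      simp only [hS2]
      exact mul_pos (by positivity) (lt_of_lt_of_le hterm0 hle)
    refine ⟨hS1pos, hS2pos, hτlast, ?_⟩
    have hdivqz : ∀ (a b : ℝ), (a / qz) / b = (a / b) / qz := by
      intro a b; rw [div_div, div_div, mul_comm]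
    have hνψ := hν ψs
    simp only [hdivqz, ← Finset.sum_div] at hνψ
    rw [hνψ, hp₁, hprod_split]
    have hA : S1 (front ψs)
        = ((K : ℝ) + 1)⁻¹ * ∑ k : Fin (K + 1), qj (ψs k.castSucc) / τ (ψs k.castSucc) := by
      simp [hS1, hfront]
    have hB : S2 ψs = ((K : ℝ) + 2)⁻¹ * ∑ k : Fin (K + 2), qj (ψs k) / τ (ψs k) := rfl
    have hS1ne : S1 (front ψs) ≠ 0 := hS1pos.ne'
    have hSig1 : (∑ i : Fin (K + 1), qj (ψs i.castSucc) / τ (ψs i.castSucc))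
        = ((K : ℝ) + 1) * S1 (front ψs) := by
      rw [hA]; field_simp
    have hSig2 : (∑ i : Fin (K + 2), qj (ψs i) / τ (ψs i)) = ((K : ℝ) + 2) * S2 ψs := by
      rw [hB]; field_simp
    rw [hSig1, hSig2]
    field_simp
  -- pointwise: f1 = f + f2
  have hptwise : ∀ ψs, f1 ψs = f ψs + f2 ψs := by
    intro ψs
    by_cases hp : p₁ ψs = 0
    · simp [hf1, hf2, hf, hp]
    · obtain ⟨hA, hB, -, hνeq⟩ := hkey ψs hp
      have hratio : p₁ ψs / ν ψs = S1 (front ψs) / S2 ψs := by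
        rw [hνeq]
        field_simp
      simp only [hf1, hf2, hf, hratio, Real.log_div hA.ne' hB.ne']
      ring
  -- U (K+1) = ∫ f2
  have hcast : ((((K + 1 : ℕ) : ℝ)) + 1)⁻¹ = (((K : ℝ) + 2))⁻¹ := by push_cast; ring_nf
  have hfun2 : ∀ ψs : Fin (K + 2) → Ψ,
      (qj (ψs 0) / qz * ∏ k : Fin (K + 1), τ (ψs k.succ)) *
        Real.log ((((K + 1 : ℕ) : ℝ) + 1)⁻¹ * ∑ k : Fin (K + 2), qj (ψs k) / τ (ψs k))
        = f2 ψs := by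
    intro ψs
    rw [hcast, ← hp₁]
  have hU2 : U (K + 1) = ∫ ψs, f2 ψs ∂π2 := by
    rw [hU (K + 1)]
    exact integral_congr_ae (Filter.Eventually.of_forall hfun2)
  have hf2int : Integrable f2 π2 :=
    (hint (K + 1)).congr (Filter.Eventually.of_forall hfun2)
  -- integrability of qj and τ
  have hτ_int : Integrable τ μ := by
    by_contra h
    rw [integral_undef h] at hτ_prob
    exact one_ne_zero hτ_prob.symm
  have hqj_int : Integrable qj μ := by
    by_contra h
    rw [integral_undef h] at hmarg
    exact hqz.ne' hmarg.symm
  -- U K = ∫ f1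
  have hU1 : U K = ∫ ψs, f1 ψs ∂π2 := by
    have hpeel := iwhvi_peel_last_integral (μ := μ) (n := K) τ
      (fun x => pK x * Real.log (S1 x))
    have heq : ∀ ψs : Fin (K + 2) → Ψ,
        f1 ψs = τ (ψs (Fin.last (K + 1))) * (pK (front ψs) * Real.log (S1 (front ψs))) := by
      intro ψs
      simp only [hf1]
      rw [hp₁_split ψs]
      ring
    rw [hπ2]
    calc U K = ∫ x, pK x * Real.log (S1 x) ∂(Measure.pi fun _ : Fin (K + 1) => μ) := by
          rw [hU K]
      _ = (∫ y, τ y ∂μ) * ∫ x, pK x * Real.log (S1 x) ∂(Measure.pi fun _ : Fin (K + 1) => μ) := by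
          rw [hτ_prob, one_mul]
      _ = ∫ ψs : Fin (K + 2) → Ψ, τ (ψs (Fin.last (K + 1))) *
            (pK (front ψs) * Real.log (S1 (front ψs))) ∂(Measure.pi fun _ => μ) := hpeel.symm
      _ = ∫ ψs : Fin (K + 2) → Ψ, f1 ψs ∂(Measure.pi fun _ => μ) :=
          integral_congr_ae (Filter.Eventually.of_forall fun ψs => (heq ψs).symm)
  have hf1int : Integrable f1 π2 := by
    have h : f1 = fun ψs => f ψs + f2 ψs := funext hptwise
    rw [h]
    exact hintKL.add hf2int
  -- Main equality
  have hEq : U K - U (K + 1) = ∫ ψs, f ψs ∂π2 := by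
    rw [hU1, hU2, ← integral_sub hf1int hf2int]
    refine integral_congr_ae (Filter.Eventually.of_forall fun ψs => ?_)
    have h := hptwise ψs
    simp only
    linarith
  -- p₁ is a normalized product density
  set Fam : Fin (K + 2) → Ψ → ℝ := fun i => Fin.cases (fun y => qj y / qz) (fun _ y => τ y) i
    with hFam
  have hp₁_prod : ∀ ψs, p₁ ψs = ∏ i, Fam i (ψs i) := by
    intro ψs
    rw [hp₁, Fin.prod_univ_succ (f := fun i : Fin (K + 2) => Fam i (ψs i))]
    simp [hFam]
  have hp₁_int : Integrable p₁ π2 := by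
    letI : MeasureSpace Ψ := ⟨μ⟩
    haveI : SigmaFinite (volume : Measure Ψ) := ‹SigmaFinite μ›
    have hvol2 : π2 = (volume : Measure (Fin (K + 2) → Ψ)) := by
      rw [hπ2, MeasureTheory.volume_pi]
      rfl
    have hFam_int : ∀ i, Integrable (Fam i) (volume : Measure Ψ) := by
      intro i
      induction i using Fin.cases with
      | zero => simpa [hFam] using (show Integrable (fun y => qj y / qz) (volume : Measure Ψ) from hqj_int.div_const qz)
      | succ j => simpa [hFam] using (show Integrable τ (volume : Measure Ψ) from hτ_int)
    rw [hvol2]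
    exact (MeasureTheory.Integrable.fin_nat_prod (f := fun i => Fam i) hFam_int).congr
      (Filter.Eventually.of_forall fun ψs => (hp₁_prod ψs).symm)
  have hp₁_integral : ∫ ψs, p₁ ψs ∂π2 = 1 := by
    letI : MeasureSpace Ψ := ⟨μ⟩
    haveI : SigmaFinite (volume : Measure Ψ) := ‹SigmaFinite μ›
    have hvol2 : π2 = (volume : Measure (Fin (K + 2) → Ψ)) := by
      rw [hπ2, MeasureTheory.volume_pi]
      rfl
    have hmargv : (∫ ψ, qj ψ) = qz := hmarg
    have hτv : (∫ ψ, τ ψ) = 1 := hτ_prob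
    rw [hvol2, show (fun ψs : Fin (K + 2) → Ψ => p₁ ψs) = fun ψs => ∏ i, Fam i (ψs i) from
      funext hp₁_prod, MeasureTheory.integral_fin_nat_prod_volume_eq_prod (fun i => Fam i),
      Fin.prod_univ_succ]
    simp only [hFam, Fin.cases_zero, Fin.cases_succ]
    rw [integral_div, hmargv, div_self hqz.ne']
    simp [hτv]
  have hτprod_int : Integrable (fun x : Fin (K + 1) → Ψ => ∏ i, τ (x i)) π1 := by
    letI : MeasureSpace Ψ := ⟨μ⟩
    haveI : SigmaFinite (volume : Measure Ψ) := ‹SigmaFinite μ›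
    have hvol1 : π1 = (volume : Measure (Fin (K + 1) → Ψ)) := by
      rw [hπ1, MeasureTheory.volume_pi]
      rfl
    rw [hvol1]
    exact MeasureTheory.Integrable.fin_nat_prod (fun _ => hτ_int)
  have hτprod_integral : (∫ x : Fin (K + 1) → Ψ, (∏ i, τ (x i)) ∂π1) = 1 := by
    letI : MeasureSpace Ψ := ⟨μ⟩
    haveI : SigmaFinite (volume : Measure Ψ) := ‹SigmaFinite μ›
    have hvol1 : π1 = (volume : Measure (Fin (K + 1) → Ψ)) := by
      rw [hπ1, MeasureTheory.volume_pi]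
      rfl
    have hτv : (∫ ψ, τ ψ) = 1 := hτ_prob
    rw [hvol1, MeasureTheory.integral_fin_nat_prod_volume_eq_prod (fun _ => τ)]
    simp [hτv]
  -- the weight function w
  set w : (Fin (K + 1) → Ψ) → ℝ := fun x => pK x / S1 x with hw
  have hS1_meas : Measurable S1 :=
    (Finset.measurable_sum _ fun k _ =>
      (hqj_meas.comp (measurable_pi_apply k)).div (hτ_meas.comp (measurable_pi_apply k))).const_mul _
  have hpK_meas : Measurable pK :=
    ((hqj_meas.comp (measurable_pi_apply 0)).div_const qz).mul
      (Finset.measurable_prod _ fun k _ => hτ_meas.comp (measurable_pi_apply _))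
  have hw_meas : Measurable w := hpK_meas.div hS1_meas
  have hw_nonneg : ∀ x, 0 ≤ w x := fun x => div_nonneg (hpK_nonneg x) (hS1_nonneg x)
  have hw_bound : ∀ x, w x ≤ ((K : ℝ) + 1) / qz * ∏ i, τ (x i) := by
    intro x
    have hrhs : 0 ≤ ((K : ℝ) + 1) / qz * ∏ i, τ (x i) :=
      mul_nonneg (by positivity) (Finset.prod_nonneg fun _ _ => hτ_nonneg _)
    by_cases hq : qj (x 0) = 0
    · have hz : pK x = 0 := by simp [hpK, hq]
      have : w x = 0 := by simp [hw, hz]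
      rw [this]; exact hrhs
    · have hτ0 : τ (x 0) ≠ 0 := fun h => hq (habs _ h)
      have hqpos : 0 < qj (x 0) := (hqj_nonneg _).lt_of_ne' hq
      have hτpos : 0 < τ (x 0) := (hτ_nonneg _).lt_of_ne' hτ0
      have hterm : 0 < ((K : ℝ) + 1)⁻¹ * (qj (x 0) / τ (x 0)) := by positivity
      have hle : ((K : ℝ) + 1)⁻¹ * (qj (x 0) / τ (x 0)) ≤ S1 x := by
        simp only [hS1]
        refine mul_le_mul_of_nonneg_left ?_ (by positivity)
        exact Finset.single_le_sum (fun k _ => div_nonneg (hqj_nonneg _) (hτ_nonneg _))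
          (Finset.mem_univ 0)
      have h1 : w x ≤ pK x / (((K : ℝ) + 1)⁻¹ * (qj (x 0) / τ (x 0))) := by
        simp only [hw]
        exact div_le_div_of_nonneg_left (hpK_nonneg x) hterm hle
      refine h1.trans (le_of_eq ?_)
      rw [Fin.prod_univ_succ (f := fun i : Fin (K + 1) => τ (x i))]
      simp only [hpK]
      field_simp
  have hw_int : Integrable w π1 := by
    refine Integrable.mono' (hτprod_int.const_mul (((K : ℝ) + 1) / qz))
      hw_meas.aestronglyMeasurable (Filter.Eventually.of_forall fun x => ?_)
    rw [Real.norm_of_nonneg (hw_nonneg x)]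
    exact hw_bound x
  -- the family T and its properties
  set T : Fin (K + 1) → (Fin (K + 1) → Ψ) → ℝ :=
    fun j x => (qj (x j) * ∏ i ∈ Finset.univ.erase j, τ (x i)) / S1 x with hT
  have hT_nonneg : ∀ j x, 0 ≤ T j x := fun j x =>
    div_nonneg (mul_nonneg (hqj_nonneg _) (Finset.prod_nonneg fun _ _ => hτ_nonneg _))
      (hS1_nonneg x)
  have hT_meas : ∀ j, Measurable (T j) := fun j =>
    ((hqj_meas.comp (measurable_pi_apply j)).mul
      (Finset.measurable_prod _ fun i _ => hτ_meas.comp (measurable_pi_apply i))).div hS1_meas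
  have hT_bound : ∀ j x, T j x ≤ ((K : ℝ) + 1) * ∏ i, τ (x i) := by
    intro j x
    have hrhs : 0 ≤ ((K : ℝ) + 1) * ∏ i, τ (x i) :=
      mul_nonneg (by positivity) (Finset.prod_nonneg fun _ _ => hτ_nonneg _)
    by_cases hq : qj (x j) = 0
    · have : T j x = 0 := by simp [hT, hq]
      rw [this]; exact hrhs
    · have hτj : τ (x j) ≠ 0 := fun h => hq (habs _ h)
      have hqpos : 0 < qj (x j) := (hqj_nonneg _).lt_of_ne' hq
      have hτpos : 0 < τ (x j) := (hτ_nonneg _).lt_of_ne' hτj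
      have hterm : 0 < ((K : ℝ) + 1)⁻¹ * (qj (x j) / τ (x j)) := by positivity
      have hle : ((K : ℝ) + 1)⁻¹ * (qj (x j) / τ (x j)) ≤ S1 x := by
        simp only [hS1]
        refine mul_le_mul_of_nonneg_left ?_ (by positivity)
        exact Finset.single_le_sum (fun k _ => div_nonneg (hqj_nonneg _) (hτ_nonneg _))
          (Finset.mem_univ j)
      have h1 : T j x ≤ (qj (x j) * ∏ i ∈ Finset.univ.erase j, τ (x i))
          / (((K : ℝ) + 1)⁻¹ * (qj (x j) / τ (x j))) := by
        simp only [hT]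
        exact div_le_div_of_nonneg_left (mul_nonneg (hqj_nonneg _)
          (Finset.prod_nonneg fun _ _ => hτ_nonneg _)) hterm hle
      refine h1.trans (le_of_eq ?_)
      rw [← Finset.mul_prod_erase Finset.univ (fun i => τ (x i)) (Finset.mem_univ j)]
      field_simp
  have hT_int : ∀ j, Integrable (T j) π1 := by
    intro j
    refine Integrable.mono' (hτprod_int.const_mul ((K : ℝ) + 1))
      (hT_meas j).aestronglyMeasurable (Filter.Eventually.of_forall fun x => ?_)
    rw [Real.norm_of_nonneg (hT_nonneg j x)]
    exact hT_bound j x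
  -- symmetry in j
  have hsym : ∀ j : Fin (K + 1), ∫ x, T j x ∂π1 = ∫ x, T 0 x ∂π1 := by
    intro j
    rw [hπ1]
    have hperm := iwhvi_perm_integral (μ := μ) (Equiv.swap (0 : Fin (K + 1)) j) (T 0)
    rw [← hperm]
    refine integral_congr_ae (Filter.Eventually.of_forall fun x => ?_)
    set e := Equiv.swap (0 : Fin (K + 1)) j with he
    have h0 : x (e 0) = x j := by rw [he, Equiv.swap_apply_left]
    have hSS : S1 (fun i => x (e i)) = S1 x := by
      simp only [hS1]
      congr 1
      exact Equiv.sum_comp e (fun k => qj (x k) / τ (x k))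
    have hprod : (∏ i ∈ Finset.univ.erase (0 : Fin (K + 1)), τ (x (e i)))
        = ∏ i ∈ Finset.univ.erase j, τ (x i) := by
      refine Finset.prod_nbij' (fun a => e a) (fun b => e b) ?_ ?_ ?_ ?_ ?_
      · intro a ha
        simp only [Finset.mem_erase, Finset.mem_univ, and_true] at ha ⊢
        intro hcon
        apply ha
        have : e a = e 0 := by rw [hcon, he, Equiv.swap_apply_left]
        exact e.injective this
      · intro b hb
        simp only [Finset.mem_erase, Finset.mem_univ, and_true] at hb ⊢
        intro hcon
        apply hb
        have h1 : e b = e j := by rw [hcon, he, Equiv.swap_apply_right]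
        exact e.injective h1
      · intro a _; exact Equiv.swap_apply_self _ _ _
      · intro b _; exact Equiv.swap_apply_self _ _ _
      · intro a _; rfl
    simp only [hT, h0, hSS, hprod]
  -- sum bound
  have hTsum_le : ∀ x, (∑ j, T j x) ≤ ((K : ℝ) + 1) * ∏ i, τ (x i) := by
    intro x
    have hrhs : 0 ≤ ((K : ℝ) + 1) * ∏ i, τ (x i) :=
      mul_nonneg (by positivity) (Finset.prod_nonneg fun _ _ => hτ_nonneg _)
    by_cases hS : S1 x = 0
    · have hz : ∀ j : Fin (K + 1), T j x = 0 := by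
        intro j; simp [hT, hS]
      rw [Finset.sum_congr rfl fun j _ => hz j]
      simpa using hrhs
    · have hnum : ∀ j : Fin (K + 1),
          qj (x j) * ∏ i ∈ Finset.univ.erase j, τ (x i)
            = (qj (x j) / τ (x j)) * ∏ i, τ (x i) := by
        intro j
        by_cases hτj : τ (x j) = 0
        · rw [habs _ hτj]
          simp [hτj]
        · rw [← Finset.mul_prod_erase Finset.univ (fun i => τ (x i)) (Finset.mem_univ j)]
          field_simp
      have hsumeq : (∑ j, T j x)
          = ((∑ j : Fin (K + 1), qj (x j) / τ (x j)) * ∏ i, τ (x i)) / S1 x := by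
        simp only [hT]
        rw [← Finset.sum_div]
        congr 1
        rw [Finset.sum_mul]
        exact Finset.sum_congr rfl fun j _ => hnum j
      rw [hsumeq]
      have hSigma : (∑ j : Fin (K + 1), qj (x j) / τ (x j)) = ((K : ℝ) + 1) * S1 x := by
        simp only [hS1]
        field_simp
      rw [hSigma]
      have : ((K : ℝ) + 1) * S1 x * (∏ i, τ (x i)) / S1 x = ((K : ℝ) + 1) * ∏ i, τ (x i) := by
        field_simp
      rw [this]
  -- c ≤ 1
  have hc_le : ∫ x, T 0 x ∂π1 ≤ 1 := by
    have hsum_int : Integrable (fun x => ∑ j, T j x) π1 :=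
      integrable_finset_sum _ fun j _ => hT_int j
    have h1 : (∑ j : Fin (K + 1), ∫ x, T j x ∂π1) = ∫ x, (∑ j, T j x) ∂π1 :=
      (integral_finset_sum _ fun j _ => hT_int j).symm
    have h2 : ∫ x, (∑ j, T j x) ∂π1 ≤ ∫ x, ((K : ℝ) + 1) * ∏ i, τ (x i) ∂π1 :=
      integral_mono hsum_int (hτprod_int.const_mul _) hTsum_le
    have h3 : ∫ x, ((K : ℝ) + 1) * (∏ i, τ (x i)) ∂π1 = (K : ℝ) + 1 := by
      rw [integral_const_mul, hτprod_integral, mul_one]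
    have h4 : (∑ j : Fin (K + 1), ∫ x, T j x ∂π1) = ((K : ℝ) + 1) * ∫ x, T 0 x ∂π1 := by
      rw [Finset.sum_congr rfl fun j _ => hsym j, Finset.sum_const, Finset.card_univ,
        Fintype.card_fin, nsmul_eq_mul]
      push_cast
      ring
    have h5 : ((K : ℝ) + 1) * (∫ x, T 0 x ∂π1) ≤ ((K : ℝ) + 1) * 1 := by
      rw [mul_one]
      calc ((K : ℝ) + 1) * (∫ x, T 0 x ∂π1) = ∑ j : Fin (K + 1), ∫ x, T j x ∂π1 := h4.symm
        _ = ∫ x, (∑ j, T j x) ∂π1 := h1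
        _ ≤ ∫ x, ((K : ℝ) + 1) * (∏ i, τ (x i)) ∂π1 := h2
        _ = (K : ℝ) + 1 := h3
    have hKpos : (0 : ℝ) < (K : ℝ) + 1 := by positivity
    have := le_of_mul_le_mul_left h5 hKpos
    linarith
  -- qz * w = T 0
  have hqzw : ∀ x, qz * w x = T 0 x := by
    intro x
    simp only [hw, hT, hpK]
    rw [← iwhvi_prod_erase_zero (f := fun i : Fin (K + 1) => τ (x i))]
    rw [← mul_div_assoc]
    congr 1
    field_simp
  -- the last-coordinate piece
  have hpiece_eq : ∫ ψs, qj (ψs (Fin.last (K + 1))) * w (front ψs) ∂π2 = ∫ x, T 0 x ∂π1 := by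
    have hpeel := iwhvi_peel_last_integral (μ := μ) (n := K) qj w
    rw [hπ2, hπ1]
    rw [show (fun ψs : Fin (K + 2) → Ψ => qj (ψs (Fin.last (K + 1))) * w (front ψs))
      = fun ψs : Fin (K + 2) → Ψ => qj (ψs (Fin.last (K + 1))) * w (fun k => ψs k.castSucc)
      from rfl]
    rw [hpeel, hmarg, ← integral_const_mul]
    exact integral_congr_ae (Filter.Eventually.of_forall fun x => hqzw x)
  have hpiece_int : Integrable
      (fun ψs : Fin (K + 2) → Ψ => qj (ψs (Fin.last (K + 1))) * w (front ψs)) π2 := by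
    rw [hπ2]
    exact iwhvi_peel_last_integrable hqj_int (by rw [← hπ1]; exact hw_int)
  -- the function G
  set G : (Fin (K + 2) → Ψ) → ℝ :=
    fun ψs => ((K : ℝ) + 1) / ((K : ℝ) + 2) * p₁ ψs
      + ((K : ℝ) + 2)⁻¹ * (qj (ψs (Fin.last (K + 1))) * w (front ψs)) with hG
  have hG_int : Integrable G π2 :=
    (hp₁_int.const_mul (((K : ℝ) + 1) / ((K : ℝ) + 2))).add
      (hpiece_int.const_mul (((K : ℝ) + 2)⁻¹))
  have hG_integral_le : ∫ ψs, G ψs ∂π2 ≤ 1 := by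
    simp only [hG]
    rw [integral_add (hp₁_int.const_mul (((K : ℝ) + 1) / ((K : ℝ) + 2)))
      (hpiece_int.const_mul (((K : ℝ) + 2)⁻¹)), integral_const_mul,
      integral_const_mul, hp₁_integral, hpiece_eq]
    have h2 : ((K : ℝ) + 2)⁻¹ * (∫ x, T 0 x ∂π1) ≤ ((K : ℝ) + 2)⁻¹ * 1 :=
      mul_le_mul_of_nonneg_left hc_le (by positivity)
    have h3 : ((K : ℝ) + 1) / ((K : ℝ) + 2) * 1 + ((K : ℝ) + 2)⁻¹ * 1 = 1 := by
      field_simp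
      ring
    linarith
  have hG_nonneg : ∀ ψs, 0 ≤ G ψs := fun ψs =>
    add_nonneg (mul_nonneg (by positivity) (hp₁_nonneg _))
      (mul_nonneg (by positivity) (mul_nonneg (hqj_nonneg _) (hw_nonneg _)))
  -- pointwise inequality p₁ - G ≤ f
  have hPG : ∀ ψs, p₁ ψs - G ψs ≤ f ψs := by
    intro ψs
    by_cases hp : p₁ ψs = 0
    · have hfz : f ψs = 0 := by simp [hf, hp]
      rw [hfz, hp]
      have := hG_nonneg ψs
      linarith
    · obtain ⟨hA, hB, hτl, hνeq⟩ := hkey ψs hp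
      have hp₁pos : 0 < p₁ ψs := (hp₁_nonneg ψs).lt_of_ne' hp
      have hS2eq : S2 ψs = ((K : ℝ) + 2)⁻¹ *
          (((K : ℝ) + 1) * S1 (front ψs)
            + qj (ψs (Fin.last (K + 1))) / τ (ψs (Fin.last (K + 1)))) := by
        simp only [hS2]
        rw [hsum_split]
        congr 2
        simp only [hS1, hfront]
        field_simp
      have hGeq : G ψs = p₁ ψs * (S2 ψs / S1 (front ψs)) := by
        simp only [hG, hw]
        rw [hS2eq, hp₁_split ψs]
        field_simp
      have hfeq : f ψs = p₁ ψs * (Real.log (S1 (front ψs)) - Real.log (S2 ψs)) := by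
        have h := hptwise ψs
        have h2 : f ψs = f1 ψs - f2 ψs := by linarith
        rw [h2]
        simp only [hf1, hf2]
        ring
      have htpos : 0 < S2 ψs / S1 (front ψs) := div_pos hB hA
      have hlog := Real.log_le_sub_one_of_pos htpos
      have hlogt : Real.log (S2 ψs / S1 (front ψs))
          = Real.log (S2 ψs) - Real.log (S1 (front ψs)) := Real.log_div hB.ne' hA.ne'
      rw [hfeq, hGeq]
      nlinarith [mul_le_mul_of_nonneg_left hlog hp₁pos.le]
  -- conclude nonnegativity
  have hge : 0 ≤ ∫ ψs, f ψs ∂π2 := by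
    have hmono : ∫ ψs, (p₁ ψs - G ψs) ∂π2 ≤ ∫ ψs, f ψs ∂π2 :=
      integral_mono (hp₁_int.sub hG_int) hintKL hPG
    rw [integral_sub hp₁_int hG_int, hp₁_integral] at hmono
    linarith
  exact ⟨hEq, hEq ▸ hge⟩
end
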